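/- Let g ∈ ℝ[[x]] satisfy g(x)·g(−x) = 1, and define h₁ = g + 1 and h_{n+1} = g·hₙ + hₙ(−x) for n ≥ 1, where hₙ(−x) denotes rescaling x ↦ −x. Then for every n ≥ 1 and every j ∈ ℕ: g(x) · [hₙ(x)·x^j evaluated at x ↦ −x] = (−1)^j · hₙ(x)·x^j, i.e. g(x)·(−1)^j·hₙ(−x)·x^j = (−1)^j·hₙ(x)·x^j with the stated identity g·hₙ(−x) = hₙ applied columnwise. (Interpretation: the columns of the Riordan matrix Bₙ = (hₙ(x), x) are R-invariant or inverse R-invariant sequences of the first kind for the Riordan involution R = (g(x), −x): the even-indexed columns are eigenvectors of R with eigenvalue 1 and the odd-indexed columns are eigenvectors with eigenvalue −1.) -/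

import Mathlib

open PowerSeries

/-! Writing `u(-x)` for `rescale (-1) u`: since `x ↦ -x` is an involution, `g·g(-x) = 1` gives
`g·(g·u + u(-x))(-x) = g·g(-x)·u(-x) + g·u = u(-x) + g·u` for every `u`. So every `hₙ` with
`n ≥ 1` (including `h₁ = g·1 + 1(-x)`) is fixed by `u ↦ g·u(-x)`, and multiplying by `x^j`
turns this into the sign `(-1)^j`. -/

section

variable {R : Type*} [CommRing R] (g : R⟦X⟧)

theorem rescale_neg_one_rescale_neg_one (u : R⟦X⟧) : rescale (-1 : R) (rescale (-1) u) = u := by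
  rw [rescale_rescale, neg_one_mul, neg_neg, rescale_one, RingHom.id_apply]

theorem mul_rescale_neg_one_mul_add_rescale_neg_one (hg : g * rescale (-1 : R) g = 1)
    (u : R⟦X⟧) :
    g * rescale (-1 : R) (g * u + rescale (-1) u) = g * u + rescale (-1) u := by
  rw [map_add, map_mul, rescale_neg_one_rescale_neg_one]
  linear_combination rescale (-1 : R) u * hg

theorem mul_rescale_neg_one_mul_X_pow {u : R⟦X⟧} (hu : g * rescale (-1 : R) u = u) (j : ℕ) :
    g * rescale (-1 : R) (u * X ^ j) = (-1) ^ j * (u * X ^ j) := by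
  rw [map_mul, map_pow, rescale_neg_one_X, neg_pow]
  linear_combination (-1) ^ j * X ^ j * hu

end

/-- Let `g · g(−x) = 1` (so `R = (g(x), −x)` is a Riordan involution), and define
`h₁ = g + 1`, `h_{n+1} = g·hₙ + hₙ(−x)`. Then for every `n ≥ 1` and every `j`, the `j`-th
column `hₙ(x)·x^j` of the Riordan matrix `Bₙ = (hₙ(x), x)` satisfies
`g(x)·(hₙ·x^j)(−x) = (−1)^j·hₙ(x)·x^j`; that is, the columns of `Bₙ` are `R`-invariant or
inverse `R`-invariant sequences of the first kind. -/
theorem stmt_19 (g : PowerSeries ℝ)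
    (hg : g * PowerSeries.rescale (-1 : ℝ) g = 1)
    (h : ℕ → PowerSeries ℝ)
    (h1 : h 1 = g + 1)
    (hrec : ∀ n : ℕ, 1 ≤ n →
      h (n + 1) = g * h n + PowerSeries.rescale (-1 : ℝ) (h n)) :
    ∀ n : ℕ, 1 ≤ n → ∀ j : ℕ,
      g * PowerSeries.rescale (-1 : ℝ) (h n * PowerSeries.X ^ j) =
        (-1 : PowerSeries ℝ) ^ j * (h n * PowerSeries.X ^ j) := by
  intro n hn j
  refine mul_rescale_neg_one_mul_X_pow g ?_ j
  obtain ⟨m, rfl⟩ : ∃ m, n = m + 1 := ⟨n - 1, by omega⟩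
  rcases Nat.eq_zero_or_pos m with rfl | hm
  · have h1' : h 1 = g * 1 + rescale (-1 : ℝ) 1 := by rw [h1, mul_one, map_one]
    rw [h1']
    exact mul_rescale_neg_one_mul_add_rescale_neg_one g hg 1
  · rw [hrec m hm]
    exact mul_rescale_neg_one_mul_add_rescale_neg_one g hg (h m)
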